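/- arXiv:1602.04164 — 5 statements merged into one kernel-verified Lean document; each statement's English description precedes it below -/
import Mathlib

section
/- There is a constant C, independent of g, such that for every measurable g : ℝ³×ℝ³ → [0,∞), every μ ∈ ℝ and every pair of radii 0 < R < R', the local energy satisfies W[g](μ,R') ≤ C (R'/R) max{1, sup_{μ'∈ℝ} W[g](μ',R)}. -/
noncomputable section
open MeasureTheory Real Set

/-- Three-dimensional Euclidean space. -/
abbrev E3 : Type := EuclideanSpace ℝ (Fin 3)

/-- The cross product on `ℝ³`. -/
def cross3 (a b : E3) : E3 :=
  WithLp.toLp 2 ![a 1 * b 2 - a 2 * b 1, a 2 * b 0 - a 0 * b 2, a 0 * b 1 - a 1 * b 0]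

/-- The open cylinder of radius `A` about the `x₁`-axis. -/
def cyl (A : ℝ) : Set E3 := {x : E3 | x 1 ^ 2 + x 2 ^ 2 < A ^ 2}

/-- The external magnetic field `B(x) = ((A² - (x₂²+x₃²))^{-θ}, 0, 0)`. -/
def Bf (A θ : ℝ) (x : E3) : E3 := WithLp.toLp 2 ![(A ^ 2 - (x 1 ^ 2 + x 2 ^ 2)) ^ (-θ), 0, 0]

/-- The local energy of a nonnegative phase-space density `g` associated to the mollifier
`φ`: `W[g](μ,R) = ½∫ φ^{μ,R}(x) ∫ |v|² g dv dx + ½∫ φ^{μ,R}(x) ρ_g(x) ∫ ρ_g(y)/|x−y| dy dx`. -/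
def Wg (g : E3 → E3 → ℝ) (φ : ℝ → ℝ) (μ R : ℝ) : ℝ :=
  (1/2) * (∫ x : E3, φ (|x 0 - μ| / R) * ∫ v : E3, ‖v‖ ^ 2 * g x v)
  + (1/2) * (∫ x : E3, φ (|x 0 - μ| / R) * (∫ v : E3, g x v) *
      ∫ y : E3, (∫ v : E3, g y v) / ‖x - y‖)


lemma phi_sum_bound (φ : ℝ → ℝ)
    (hφone : ∀ a ∈ Icc (0:ℝ) 1, φ a = 1) (hφzero : ∀ a : ℝ, 2 ≤ a → φ a = 0)
    (hφrange : ∀ a : ℝ, 0 ≤ φ a ∧ φ a ≤ 1)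
    (μ R R' : ℝ) (hR : 0 < R) (hRR' : R < R') (t : ℝ) :
    φ (|t - μ| / R') ≤ ∑ k ∈ Finset.range ⌈2 * R' / R⌉₊,
      φ (|t - (μ - 2 * R' + 2 * R * k + R)| / R) := by
  have hR' : 0 < R' := hR.trans hRR'
  set N := ⌈2 * R' / R⌉₊ with hNdef
  have hN1 : 1 ≤ N := Nat.one_le_ceil_iff.mpr (by positivity)
  have hNge : 2 * R' / R ≤ (N : ℝ) := Nat.le_ceil _
  have hNge' : 4 * R' ≤ 2 * R * N := by
    rw [div_le_iff₀ hR] at hNge; nlinarith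
  rcases le_or_gt (|t - μ|) (2 * R') with hcase | hcase
  · -- find a good k
    set s := t - μ + 2 * R' with hs
    have hs0 : 0 ≤ s := by
      have := abs_le.mp hcase; simp only [hs]; linarith [this.1]
    have hs4 : s ≤ 4 * R' := by
      have := abs_le.mp hcase; simp only [hs]; linarith [this.2]
    set k := min ⌊s / (2 * R)⌋₊ (N - 1) with hk
    have hkN : k ∈ Finset.range N := by
      refine Finset.mem_range.mpr ?_
      exact lt_of_le_of_lt (min_le_right _ _) (Nat.sub_lt hN1 one_pos)
    have hk1 : 2 * R * k ≤ s := by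
      have h1 : (k : ℝ) ≤ ⌊s / (2 * R)⌋₊ := by
        exact_mod_cast min_le_left _ _
      have h2 : (⌊s / (2 * R)⌋₊ : ℝ) ≤ s / (2 * R) := Nat.floor_le (by positivity)
      have := h1.trans h2
      rw [le_div_iff₀ (by positivity)] at this; nlinarith
    have hk2 : s ≤ 2 * R * k + 2 * R := by
      rcases le_or_gt ⌊s / (2 * R)⌋₊ (N - 1) with h | h
      · have hkeq : k = ⌊s / (2 * R)⌋₊ := min_eq_left h
        have h2 : s / (2 * R) < ⌊s / (2 * R)⌋₊ + 1 := Nat.lt_floor_add_one _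
        rw [div_lt_iff₀ (by positivity)] at h2
        rw [hkeq]; nlinarith
      · have hkeq : k = N - 1 := min_eq_right h.le
        have hc : (k : ℝ) = (N : ℝ) - 1 := by
          rw [hkeq, Nat.cast_sub hN1, Nat.cast_one]
        rw [hc]; nlinarith
    have habs : |t - (μ - 2 * R' + 2 * R * k + R)| ≤ R := by
      rw [abs_le]; constructor <;> [skip; skip] <;> simp only [hs] at hk1 hk2 <;> linarith
    have hone : φ (|t - (μ - 2 * R' + 2 * R * k + R)| / R) = 1 := by
      apply hφone
      constructor
      · positivity
      · rw [div_le_one hR]; exact habs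
    calc φ (|t - μ| / R') ≤ 1 := (hφrange _).2
      _ = φ (|t - (μ - 2 * R' + 2 * R * ↑k + R)| / R) := hone.symm
      _ ≤ _ := Finset.single_le_sum (f := fun i : ℕ => φ (|t - (μ - 2 * R' + 2 * R * i + R)| / R)) (fun i _ => (hφrange _).1) hkN
  · have : φ (|t - μ| / R') = 0 := by
      apply hφzero
      rw [le_div_iff₀ hR']; linarith
    rw [this]
    exact Finset.sum_nonneg fun i _ => (hφrange _).1

/-- Lemma 4 of the paper: for any nonnegative density `g` and radii `0 < R < R'`, the local
energy scales as `W[g](μ,R') ≤ C (R'/R) max{1, sup_{μ'} W[g](μ',R)}`, with `C` independent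
of `g`. -/
theorem local_energy_scaling
    (φ : ℝ → ℝ) (hφsmooth : ContDiff ℝ (⊤ : ℕ∞) φ)
    (hφone : ∀ a ∈ Icc (0:ℝ) 1, φ a = 1) (hφzero : ∀ a : ℝ, 2 ≤ a → φ a = 0)
    (hφrange : ∀ a : ℝ, 0 ≤ φ a ∧ φ a ≤ 1)
    (hφderiv : ∀ a : ℝ, -2 ≤ deriv φ a ∧ deriv φ a ≤ 0) :
    ∃ C : ℝ, 0 < C ∧
      ∀ g : E3 → E3 → ℝ, Measurable (Function.uncurry g) → (∀ x v, 0 ≤ g x v) →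
        Integrable (fun x : E3 => ∫ v : E3, ‖v‖ ^ 2 * g x v) →
        Integrable (fun x : E3 => (∫ v : E3, g x v) * ∫ y : E3, (∫ v : E3, g y v) / ‖x - y‖) →
        ∀ μ R R' : ℝ, 0 < R → R < R' →
          Wg g φ μ R' ≤ C * (R' / R) * max 1 (⨆ μ' : ℝ, Wg g φ μ' R) := by
  refine ⟨3, by norm_num, ?_⟩
  intro g hgm hg0 hKint hPint μ R R' hR hRR'
  have hR' : 0 < R' := hR.trans hRR'
  set K : E3 → ℝ := fun x => ∫ v : E3, ‖v‖ ^ 2 * g x v with hKdef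
  set P : E3 → ℝ := fun x => (∫ v : E3, g x v) * ∫ y : E3, (∫ v : E3, g y v) / ‖x - y‖ with hPdef
  have hK0 : ∀ x, 0 ≤ K x := fun x =>
    integral_nonneg fun v => mul_nonneg (by positivity) (hg0 x v)
  have hP0 : ∀ x, 0 ≤ P x := fun x =>
    mul_nonneg (integral_nonneg fun v => hg0 x v)
      (integral_nonneg fun y => div_nonneg (integral_nonneg fun v => hg0 y v) (norm_nonneg _))
  -- measurability of cutoff
  have hmeas : ∀ c r : ℝ, AEStronglyMeasurable (fun x : E3 => φ (|x 0 - c| / r)) volume := by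
    intro c r
    exact (hφsmooth.continuous.comp
      (((((continuous_apply (0 : Fin 3)).comp (PiLp.continuous_ofLp (p := 2) (β := fun _ : Fin 3 => ℝ))).sub continuous_const).abs).div_const r)).aestronglyMeasurable
  have hbd : ∀ c r : ℝ, ∃ C, ∀ x : E3, ‖φ (|x 0 - c| / r)‖ ≤ C :=
    fun c r => ⟨1, fun x => by
      rw [Real.norm_eq_abs, abs_le]; exact ⟨by linarith [(hφrange (|x 0 - c| / r)).1], (hφrange _).2⟩⟩
  have hIntK : ∀ c r : ℝ, Integrable (fun x : E3 => φ (|x 0 - c| / r) * K x) :=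
    fun c r => let ⟨_, hC⟩ := hbd c r; hKint.bdd_mul (hmeas c r) (Filter.Eventually.of_forall hC)
  have hIntP : ∀ c r : ℝ, Integrable (fun x : E3 => φ (|x 0 - c| / r) * P x) :=
    fun c r => let ⟨_, hC⟩ := hbd c r; hPint.bdd_mul (hmeas c r) (Filter.Eventually.of_forall hC)
  -- rewrite Wg using K, P
  have hWg : ∀ (c r : ℝ), Wg g φ c r =
      (1/2) * (∫ x : E3, φ (|x 0 - c| / r) * K x) + (1/2) * (∫ x : E3, φ (|x 0 - c| / r) * P x) := by
    intro c r
    unfold Wg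
    congr 2
    exact integral_congr_ae (Filter.Eventually.of_forall fun x => (mul_assoc _ _ _))
  -- boundedness above of the family
  set M : ℝ := (1/2) * (∫ x : E3, K x) + (1/2) * (∫ x : E3, P x) with hMdef
  have hWle : ∀ μ' : ℝ, Wg g φ μ' R ≤ M := by
    intro μ'
    rw [hWg]
    have h1 : (∫ x : E3, φ (|x 0 - μ'| / R) * K x) ≤ ∫ x : E3, K x :=
      integral_mono (hIntK μ' R) hKint fun x =>
        mul_le_of_le_one_left (hK0 x) (hφrange _).2
    have h2 : (∫ x : E3, φ (|x 0 - μ'| / R) * P x) ≤ ∫ x : E3, P x :=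
      integral_mono (hIntP μ' R) hPint fun x =>
        mul_le_of_le_one_left (hP0 x) (hφrange _).2
    rw [hMdef]; linarith
  have hbdd : BddAbove (Set.range fun μ' : ℝ => Wg g φ μ' R) := by
    refine ⟨M, ?_⟩; rintro _ ⟨μ', rfl⟩; exact hWle μ'
  set S : ℝ := ⨆ μ' : ℝ, Wg g φ μ' R with hSdef
  have hWnn : ∀ (c r : ℝ), 0 ≤ Wg g φ c r := by
    intro c r
    rw [hWg]
    have h1 : 0 ≤ ∫ x : E3, φ (|x 0 - c| / r) * K x :=
      integral_nonneg fun x => mul_nonneg (hφrange _).1 (hK0 x)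
    have h2 : 0 ≤ ∫ x : E3, φ (|x 0 - c| / r) * P x :=
      integral_nonneg fun x => mul_nonneg (hφrange _).1 (hP0 x)
    linarith
  have hS0 : 0 ≤ S := (hWnn μ R).trans (le_ciSup hbdd μ)
  set N := ⌈2 * R' / R⌉₊ with hNdef
  -- the key integral estimate
  have key : ∀ F : E3 → ℝ, Integrable F → (∀ x, 0 ≤ F x) →
      (∀ c r : ℝ, Integrable (fun x : E3 => φ (|x 0 - c| / r) * F x)) →
      (∫ x : E3, φ (|x 0 - μ| / R') * F x) ≤
        ∑ k ∈ Finset.range N, ∫ x : E3, φ (|x 0 - (μ - 2 * R' + 2 * R * k + R)| / R) * F x := by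
    intro F hFi hF0 hFint
    rw [← integral_finset_sum _ (fun k _ => hFint _ R)]
    refine integral_mono (hFint μ R') (integrable_finset_sum _ fun k _ => hFint _ R) fun x => ?_
    have := phi_sum_bound φ hφone hφzero hφrange μ R R' hR hRR' (x 0)
    calc φ (|x 0 - μ| / R') * F x
        ≤ (∑ k ∈ Finset.range N, φ (|x 0 - (μ - 2 * R' + 2 * R * k + R)| / R)) * F x :=
          mul_le_mul_of_nonneg_right this (hF0 x)
      _ = ∑ k ∈ Finset.range N, φ (|x 0 - (μ - 2 * R' + 2 * R * k + R)| / R) * F x :=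
          Finset.sum_mul _ _ _
  -- combine
  have hmain : Wg g φ μ R' ≤ ∑ k ∈ Finset.range N, Wg g φ (μ - 2 * R' + 2 * R * k + R) R := by
    rw [hWg]
    have hK' := key K hKint hK0 hIntK
    have hP' := key P hPint hP0 hIntP
    have : ∑ k ∈ Finset.range N, Wg g φ (μ - 2 * R' + 2 * R * k + R) R
        = (1/2) * (∑ k ∈ Finset.range N, ∫ x : E3, φ (|x 0 - (μ - 2 * R' + 2 * R * k + R)| / R) * K x)
        + (1/2) * (∑ k ∈ Finset.range N, ∫ x : E3, φ (|x 0 - (μ - 2 * R' + 2 * R * k + R)| / R) * P x) := by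
      rw [Finset.mul_sum, Finset.mul_sum, ← Finset.sum_add_distrib]
      exact Finset.sum_congr rfl fun k _ => hWg _ R
    rw [this]
    linarith
  have hsum : ∑ k ∈ Finset.range N, Wg g φ (μ - 2 * R' + 2 * R * k + R) R ≤ N * S := by
    calc ∑ k ∈ Finset.range N, Wg g φ (μ - 2 * R' + 2 * R * k + R) R
        ≤ ∑ _k ∈ Finset.range N, S :=
          Finset.sum_le_sum fun k _ => le_ciSup hbdd _
      _ = N * S := by rw [Finset.sum_const, Finset.card_range, nsmul_eq_mul]
  have hN3 : (N : ℝ) ≤ 3 * (R' / R) := by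
    have h1 : (N : ℝ) < 2 * R' / R + 1 := Nat.ceil_lt_add_one (by positivity)
    have h2 : (1:ℝ) ≤ R' / R := (one_le_div hR).mpr hRR'.le
    have : 2 * R' / R = 2 * (R' / R) := by ring
    nlinarith
  calc Wg g φ μ R' ≤ (N : ℝ) * S := hmain.trans hsum
    _ ≤ (3 * (R' / R)) * max 1 S := by
        refine mul_le_mul hN3 (le_max_right 1 S) hS0 (by positivity)
    _ = 3 * (R' / R) * max 1 S := by ring
end
end

section
/- Let a < b, let Γ : [a,b] → ℝ be twice differentiable with |Γ''(s)| ≤ K for all s ∈ [a,b], let t₀ ∈ [a,b] be a point where |Γ| attains its minimum over [a,b], and let m > 0 satisfy |Γ'(t₀)| ≥ m and K(b−a) ≤ m. Then |Γ(s)| ≥ (m/2)|s − t₀| for all s ∈ [a,b]. (This is the abstract form of Lemma 3 of the paper: applied to Γ(s) = X₁(s) − Y₁(s), the difference of the first spatial components of two characteristics of the partial dynamics, whose second derivative equals the difference of the electric fields along the two trajectories, it yields |X(s) − Y(s)| ≥ (h𝒱^{−η}/4)|s − t₀|.) -/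
/-!
After replacing `Γ` by `-Γ` and reflecting `[s, t₀]` onto itself, we may assume `Γ'(t₀) ≥ m`
and `t₀ ≤ s`. Integrating `Γ'' ≥ -K` twice gives
`Γ(s) ≥ Γ(t₀) + m (s - t₀) - K (s - t₀)² / 2 ≥ Γ(t₀) + (m / 2) (s - t₀)`, as `K (s - t₀) ≤ m`.
Finally `Γ(t₀) ≥ 0`: `Γ²` is minimal at `t₀` on `[t₀, s]`, so its one-sided derivative
`2 Γ(t₀) Γ'(t₀)` is nonnegative, and `Γ'(t₀) > 0`.
-/

open Set

lemma sub_le_sub_of_hasDerivAt_le {f g f' g' : ℝ → ℝ} {a b : ℝ} (hab : a ≤ b)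
    (hf : ∀ x ∈ Icc a b, HasDerivAt f (f' x) x) (hg : ∀ x ∈ Icc a b, HasDerivAt g (g' x) x)
    (hle : ∀ x ∈ Ioo a b, g' x ≤ f' x) :
    g b - g a ≤ f b - f a := by
  have hfg : ∀ x ∈ Icc a b, HasDerivAt (f - g) ((f' - g') x) x :=
    fun x hx => (hf x hx).sub (hg x hx)
  have hmono : MonotoneOn (f - g) (Icc a b) := by
    refine monotoneOn_of_hasDerivWithinAt_nonneg (convex_Icc a b) (f' := f' - g')
      (fun x hx => (hfg x hx).continuousAt.continuousWithinAt) (fun x hx => ?_) (fun x hx => ?_)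
    · exact (hfg x (interior_subset hx)).hasDerivWithinAt
    · rw [interior_Icc] at hx
      exact sub_nonneg.2 (hle x hx)
  have := hmono (left_mem_Icc.2 hab) (right_mem_Icc.2 hab) hab
  simp only [Pi.sub_apply] at this
  linarith

lemma taylor_lower_bound_of_neg_le_second_deriv {f f' f'' : ℝ → ℝ} {K t s : ℝ} (hts : t ≤ s)
    (hf : ∀ x ∈ Icc t s, HasDerivAt f (f' x) x) (hf' : ∀ x ∈ Icc t s, HasDerivAt f' (f'' x) x)
    (hf'' : ∀ x ∈ Ioo t s, -K ≤ f'' x) :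
    f t + f' t * (s - t) - K / 2 * (s - t) ^ 2 ≤ f s := by
  have hslope : ∀ x ∈ Icc t s, f' t - K * (x - t) ≤ f' x := by
    intro x hx
    have := sub_le_sub_of_hasDerivAt_le hx.1 (fun y hy => hf' y (Icc_subset_Icc_right hx.2 hy))
      (fun y _ => hasDerivAt_mul_const (-K)) (fun y hy => hf'' y (Ioo_subset_Ioo_right hx.2 hy))
    linarith
  have hquad : ∀ x, HasDerivAt (fun y => f' t * y - K / 2 * (y - t) ^ 2)
      (f' t - K * (x - t)) x := by
    intro x
    refine (((hasDerivAt_id' x).const_mul (f' t)).sub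
      ((((hasDerivAt_id' x).sub_const t).pow 2).const_mul (K / 2))).congr_deriv ?_
    push_cast
    ring
  have := sub_le_sub_of_hasDerivAt_le hts hf (fun x _ => hquad x)
    (fun x hx => hslope x (Ioo_subset_Icc_self hx))
  linarith

lemma nonneg_of_isMinOn_abs_of_deriv_pos {f : ℝ → ℝ} {f' t s : ℝ} (hts : t < s)
    (hf : HasDerivWithinAt f f' (Icc t s) t) (hf' : 0 < f')
    (hmin : IsMinOn (|f ·|) (Icc t s) t) : 0 ≤ f t := by
  have hsq : IsMinOn (fun x => f x ^ 2) (Icc t s) t :=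
    isMinOn_iff.2 fun x hx => sq_le_sq.2 (isMinOn_iff.1 hmin x hx)
  have hcone : s - t ∈ posTangentConeAt (Icc t s) t :=
    sub_mem_posTangentConeAt_of_segment_subset (segment_eq_Icc hts.le ▸ subset_rfl)
  have hderiv := hsq.localize.hasFDerivWithinAt_nonneg
    (hasDerivWithinAt_iff_hasFDerivWithinAt.1 (hf.pow 2)) hcone
  simp only [Nat.cast_ofNat, Nat.add_one_sub_one, pow_one,
    ContinuousLinearMap.toSpanSingleton_apply, smul_eq_mul] at hderiv
  have := (mul_nonneg_iff_of_pos_left (sub_pos.2 hts)).1 hderiv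
  have := (mul_nonneg_iff_of_pos_right hf').1 this
  linarith

lemma half_mul_sub_le_of_isMinOn_abs {f f' f'' : ℝ → ℝ} {K m t s : ℝ} (hm : 0 < m) (hts : t < s)
    (hf : ∀ x ∈ Icc t s, HasDerivAt f (f' x) x) (hf' : ∀ x ∈ Icc t s, HasDerivAt f' (f'' x) x)
    (hf'' : ∀ x ∈ Ioo t s, -K ≤ f'' x) (hmin : IsMinOn (|f ·|) (Icc t s) t)
    (hslope : m ≤ f' t) (hsmall : K * (s - t) ≤ m) :
    m / 2 * (s - t) ≤ f s := by
  have hft : 0 ≤ f t := nonneg_of_isMinOn_abs_of_deriv_pos hts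
    (hf t (left_mem_Icc.2 hts.le)).hasDerivWithinAt (hm.trans_le hslope) hmin
  have htaylor := taylor_lower_bound_of_neg_le_second_deriv hts.le hf hf' hf''
  have hst : 0 ≤ s - t := sub_nonneg.2 hts.le
  nlinarith [mul_le_mul_of_nonneg_right hslope hst, mul_le_mul_of_nonneg_right hsmall hst]

lemma half_mul_sub_le_abs_of_isMinOn_abs {f f' f'' : ℝ → ℝ} {K m t s : ℝ} (hm : 0 < m)
    (hts : t ≤ s) (hf : ∀ x ∈ Icc t s, HasDerivAt f (f' x) x)
    (hf' : ∀ x ∈ Icc t s, HasDerivAt f' (f'' x) x) (hf'' : ∀ x ∈ Icc t s, |f'' x| ≤ K)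
    (hmin : IsMinOn (|f ·|) (Icc t s) t) (hslope : m ≤ |f' t|) (hsmall : K * (s - t) ≤ m) :
    m / 2 * (s - t) ≤ |f s| := by
  rcases hts.eq_or_lt with rfl | hlt
  · simp
  have hf''_bounds : ∀ x ∈ Ioo t s, -K ≤ f'' x ∧ f'' x ≤ K :=
    fun x hx => abs_le.1 (hf'' x (Ioo_subset_Icc_self hx))
  rcases le_abs'.1 hslope with hneg | hpos
  · have := half_mul_sub_le_of_isMinOn_abs (f := fun x => -f x) hm hlt
      (fun x hx => (hf x hx).neg) (fun x hx => (hf' x hx).neg)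
      (fun x hx => neg_le_neg (hf''_bounds x hx).2) (by simpa using hmin) (by linarith) hsmall
    exact this.trans (neg_le_abs _)
  · exact (half_mul_sub_le_of_isMinOn_abs hm hlt hf hf' (fun x hx => (hf''_bounds x hx).1) hmin
      hpos hsmall).trans (le_abs_self _)

theorem lower_bound_from_min_velocity_gap_general
    (a b : ℝ) (Γ Γ' Γ'' : ℝ → ℝ)
    (hΓ : ∀ s ∈ Icc a b, HasDerivAt Γ (Γ' s) s)
    (hΓ' : ∀ s ∈ Icc a b, HasDerivAt Γ' (Γ'' s) s)
    (K m : ℝ) (hm : 0 < m)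
    (hΓ'' : ∀ s ∈ Icc a b, |Γ'' s| ≤ K)
    (t₀ : ℝ) (ht₀ : t₀ ∈ Icc a b)
    (hmin : ∀ s ∈ Icc a b, |Γ t₀| ≤ |Γ s|)
    (hslope : m ≤ |Γ' t₀|)
    (hsmall : K * (b - a) ≤ m) :
    ∀ s ∈ Icc a b, (m / 2) * |s - t₀| ≤ |Γ s| := by
  intro s hs
  have hK : 0 ≤ K := (abs_nonneg _).trans (hΓ'' t₀ ht₀)
  rcases le_total t₀ s with h | h
  · have hsub : Icc t₀ s ⊆ Icc a b := Icc_subset_Icc ht₀.1 hs.2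
    rw [abs_of_nonneg (sub_nonneg.2 h)]
    exact half_mul_sub_le_abs_of_isMinOn_abs hm h (fun x hx => hΓ x (hsub hx))
      (fun x hx => hΓ' x (hsub hx)) (fun x hx => hΓ'' x (hsub hx))
      (isMinOn_iff.2 fun x hx => hmin x (hsub hx)) hslope
      ((mul_le_mul_of_nonneg_left (by linarith [hs.2, ht₀.1]) hK).trans hsmall)
  · -- `x ↦ s + t₀ - x` swaps the endpoints of `[s, t₀]`
    have hrefl : ∀ x ∈ Icc s t₀, s + t₀ - x ∈ Icc a b :=
      fun x hx => Icc_subset_Icc hs.1 ht₀.2 ⟨by linarith [hx.2], by linarith [hx.1]⟩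
    have := half_mul_sub_le_abs_of_isMinOn_abs (f := fun x => Γ (s + t₀ - x)) hm h
      (fun x hx => (hΓ _ (hrefl x hx)).comp_const_sub _ _)
      (fun x hx => ((hΓ' _ (hrefl x hx)).comp_const_sub _ _).neg)
      (fun x hx => by simpa using hΓ'' _ (hrefl x hx))
      (isMinOn_iff.2 fun x hx => by simpa using hmin _ (hrefl x hx))
      (by simpa using hslope)
      ((mul_le_mul_of_nonneg_left (by linarith [hs.1, ht₀.2]) hK).trans hsmall)
    rw [abs_of_nonpos (sub_nonpos.2 h), neg_sub]
    simpa using this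

/-- Abstract form of Lemma 3 of the paper: if `Γ` is twice differentiable on `[a,b]` with
`|Γ''| ≤ K`, `t₀` is a minimum point of `|Γ|` on `[a,b]`, `|Γ'(t₀)| ≥ m > 0` and
`K(b-a) ≤ m`, then `|Γ(s)| ≥ (m/2)|s - t₀|` on `[a,b]`. -/
theorem lower_bound_from_min_velocity_gap
    (a b : ℝ) (hab : a < b) (Γ Γ' Γ'' : ℝ → ℝ)
    (hΓ : ∀ s ∈ Icc a b, HasDerivAt Γ (Γ' s) s)
    (hΓ' : ∀ s ∈ Icc a b, HasDerivAt Γ' (Γ'' s) s)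
    (K m : ℝ) (hK : 0 ≤ K) (hm : 0 < m)
    (hΓ'' : ∀ s ∈ Icc a b, |Γ'' s| ≤ K)
    (t₀ : ℝ) (ht₀ : t₀ ∈ Icc a b)
    (hmin : ∀ s ∈ Icc a b, |Γ t₀| ≤ |Γ s|)
    (hslope : m ≤ |Γ' t₀|)
    (hsmall : K * (b - a) ≤ m) :
    ∀ s ∈ Icc a b, (m / 2) * |s - t₀| ≤ |Γ s| :=
  lower_bound_from_min_velocity_gap_general a b Γ Γ' Γ'' hΓ hΓ' K m hm hΓ'' t₀ ht₀ hmin hslope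
    hsmall
end

section
/- Let ρ : ℝ³ → [0,∞) be measurable, vanishing outside the cylinder D, with ρ ≤ M everywhere, and suppose ∫_{i ≤ x₁ ≤ i+1} ρ(x) dx ≤ C₁ |i|^{−α} for every nonzero integer i, where 0 < α ≤ 1. Then there is a constant C, depending only on A, M, C₁ and α, such that sup_{x∈ℝ³} ∫ ρ(y)/|x−y| dy ≤ C. -/
/-!
By the layer-cake formula, `∫ ρ(y) / |x - y| dy = ∫₀^∞ ν(B(x, 1/t)) dt` with `ν = ρ dy`.
For `t > 1` the bound `ρ ≤ M` gives `ν(B(x, r)) = O(r³)`. For `t ≤ 1`, a ball of radius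
`r = 1/t ≥ 1` meets `O(r)` unit slabs `i ≤ x₁ ≤ i + 1`; each has mass `O(1)`, being a bounded
piece of the cylinder, and mass `O(|i| ^ (-β))` for `i ≠ 0`, with `β = α / 2 < 1`. Summing,
`ν(B(x, r)) = O(1 + r ^ (1 - β))`, which is integrable in `t` on `(0, 1]`.
-/

noncomputable section
open MeasureTheory Real Set

open Metric

section PowerSums

open Finset

variable {β : ℝ}

lemma one_sub_mul_rpow_neg_le_rpow_sub_rpow (hβ0 : 0 ≤ β) (hβ1 : β ≤ 1) {t : ℝ} (ht : 0 ≤ t) :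
    (1 - β) * (t + 1) ^ (-β) ≤ (t + 1) ^ (1 - β) - t ^ (1 - β) := by
  set u := t + 1
  have hu : 0 < u := by positivity
  -- Bernoulli's inequality for `t = u * (1 - u⁻¹)`
  have hbern : (1 + -u⁻¹) ^ (1 - β) ≤ 1 + (1 - β) * -u⁻¹ :=
    rpow_one_add_le_one_add_mul_self (by simpa using inv_le_one_of_one_le₀ (by linarith))
      (by linarith) (by linarith)
  have ht_eq : t = u * (1 + -u⁻¹) := by field_simp; ring
  have hpow : u ^ (-β) = u ^ (1 - β) * u⁻¹ := by
    rw [← rpow_neg_one, ← rpow_add hu]; ring_nf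
  rw [ht_eq, mul_rpow hu.le (by rw [ht_eq] at ht; nlinarith), hpow]
  nlinarith [rpow_pos_of_pos hu (1 - β)]

lemma sum_Icc_rpow_neg_le (hβ0 : 0 ≤ β) (hβ1 : β < 1) (n : ℕ) :
    ∑ k ∈ Icc 1 n, (k : ℝ) ^ (-β) ≤ (n : ℝ) ^ (1 - β) / (1 - β) := by
  have hβ : 0 < 1 - β := by linarith
  induction n with
  | zero => simp [zero_rpow hβ.ne']
  | succ n ih =>
    rw [sum_Icc_succ_top (by omega), le_div_iff₀ hβ, add_mul]
    rw [le_div_iff₀ hβ] at ih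
    have hstep := one_sub_mul_rpow_neg_le_rpow_sub_rpow hβ0 hβ1.le n.cast_nonneg
    push_cast
    linarith

lemma sum_natAbs_le_two_mul_sum {s : Finset ℤ} {t : Finset ℕ} (hst : ∀ i ∈ s, i.natAbs ∈ t)
    {f : ℕ → ℝ} (hf : ∀ k, 0 ≤ f k) : ∑ i ∈ s, f i.natAbs ≤ 2 * ∑ k ∈ t, f k := by
  rw [← sum_fiberwise_of_maps_to hst, mul_sum]
  gcongr with k
  have hfiber : #{i ∈ s | i.natAbs = k} ≤ 2 :=
    calc #{i ∈ s | i.natAbs = k} ≤ #{(k : ℤ), -(k : ℤ)} := by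
          refine Finset.card_le_card fun i hi => ?_
          rw [mem_filter] at hi
          rcases Int.natAbs_eq i with h | h <;> simp [hi.2 ▸ h]
      _ ≤ 2 := card_le_two
  calc ∑ i ∈ s with i.natAbs = k, f i.natAbs = #{i ∈ s | i.natAbs = k} * f k := by
        rw [sum_congr rfl fun i hi => by rw [(mem_filter.1 hi).2], sum_const, nsmul_eq_mul]
    _ ≤ 2 * f k := by gcongr; exacts [hf k, mod_cast hfiber]

lemma sum_Ico_erase_zero_abs_rpow_neg_le (hβ0 : 0 ≤ β) (hβ1 : β < 1) (L : ℤ) (n : ℕ) :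
    ∑ i ∈ (Finset.Ico L (L + n)).erase 0, |(i : ℝ)| ^ (-β) ≤ 3 * ((n : ℝ) ^ (1 - β) / (1 - β)) := by
  rcases Nat.eq_zero_or_pos n with rfl | hn
  · simp [zero_rpow (by linarith : 1 - β ≠ 0)]
  have hn' : (0 : ℝ) < n := by exact_mod_cast hn
  have habs (i : ℤ) : |(i : ℝ)| = (i.natAbs : ℝ) := by simp [Nat.cast_natAbs]
  rw [← sum_filter_add_sum_filter_not _ (fun i : ℤ => i.natAbs ≤ n)]
  -- terms with `|i| ≤ n` are bounded by the symmetric sum, the at most `n` others by `n ^ (-β)`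
  have hnear : ∑ i ∈ (Finset.Ico L (L + n)).erase 0 with i.natAbs ≤ n, |(i : ℝ)| ^ (-β)
      ≤ 2 * ((n : ℝ) ^ (1 - β) / (1 - β)) := by
    simp_rw [habs]
    refine (sum_natAbs_le_two_mul_sum (t := Finset.Icc 1 n) (fun i hi => ?_)
      (fun k => rpow_nonneg k.cast_nonneg _)).trans ?_
    · simp only [mem_filter, mem_erase] at hi
      simp only [Finset.mem_Icc]; omega
    · gcongr; exact sum_Icc_rpow_neg_le hβ0 hβ1 n
  have hfar : ∑ i ∈ (Finset.Ico L (L + n)).erase 0 with ¬ i.natAbs ≤ n, |(i : ℝ)| ^ (-β)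
      ≤ (n : ℝ) ^ (1 - β) := by
    calc _ ≤ #((Finset.Ico L (L + n)).erase 0 |>.filter fun i : ℤ => ¬ i.natAbs ≤ n)
          • (n : ℝ) ^ (-β) := by
          refine sum_le_card_nsmul _ _ _ fun i hi => ?_
          simp only [mem_filter] at hi
          rw [habs]
          exact rpow_le_rpow_of_nonpos hn' (by exact_mod_cast (not_le.1 hi.2).le) (by linarith)
      _ ≤ n * (n : ℝ) ^ (-β) := by
          rw [nsmul_eq_mul]; gcongr
          exact (Finset.card_le_card ((filter_subset _ _).trans (erase_subset _ _))).trans (by simp)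
      _ = (n : ℝ) ^ (1 - β) := by rw [sub_eq_add_neg, rpow_add hn', rpow_one]
  have hle : (n : ℝ) ^ (1 - β) ≤ (n : ℝ) ^ (1 - β) / (1 - β) :=
    le_div_self (by positivity) (by linarith) (by linarith)
  linarith

end PowerSums

lemma lintegral_Ioc_zero_one_ofReal_const_add_mul_rpow {b c γ : ℝ} (hb : 0 ≤ b) (hc : 0 ≤ c)
    (hγ : γ < 1) :
    ∫⁻ t in Ioc (0 : ℝ) 1, ENNReal.ofReal (b + c * t ^ (-γ))
      = ENNReal.ofReal (b + c / (1 - γ)) := by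
  have hi : IntegrableOn (fun t : ℝ => t ^ (-γ)) (Ioc 0 1) :=
    (intervalIntegral.intervalIntegrable_rpow' (by linarith)).1
  have hint : IntegrableOn (fun t : ℝ => b + c * t ^ (-γ)) (Ioc 0 1) :=
    (integrable_const b).add (hi.const_mul c)
  rw [← ofReal_integral_eq_lintegral_ofReal hint
    ((ae_restrict_iff' measurableSet_Ioc).2 (ae_of_all _ fun t ht => by
      have := rpow_nonneg ht.1.le (-γ); positivity)),
    integral_add (integrable_const b) (hi.const_mul c), integral_const_mul, setIntegral_const,
    ← intervalIntegral.integral_of_le zero_le_one, integral_rpow (Or.inl (by linarith))]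
  simp [zero_rpow (by linarith : -γ + 1 ≠ 0), sub_eq_neg_add, div_eq_mul_inv]

lemma lintegral_Ioi_one_ofReal_mul_rpow_neg {a d : ℝ} (ha : 0 ≤ a) (hd : 1 < d) :
    ∫⁻ t in Ioi (1 : ℝ), ENNReal.ofReal (a * t ^ (-d)) = ENNReal.ofReal (a / (d - 1)) := by
  rw [← ofReal_integral_eq_lintegral_ofReal
    ((integrableOn_Ioi_rpow_of_lt (by linarith) one_pos).const_mul a)
    ((ae_restrict_iff' measurableSet_Ioi).2 (ae_of_all _ fun t ht => by
      have := rpow_nonneg (zero_le_one.trans (le_of_lt ht)) (-d); positivity)),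
    integral_const_mul, integral_Ioi_rpow_of_lt (by linarith) one_pos, one_rpow]
  have : -d + 1 ≠ 0 := by linarith
  have : d - 1 ≠ 0 := by linarith
  congr 1
  field_simp
  ring

theorem lintegral_ofReal_inv_norm_sub_le {E : Type*} [NormedAddCommGroup E] [MeasurableSpace E]
    [OpensMeasurableSpace E] (ν : Measure E) (x : E) {a b c d γ : ℝ} (ha : 0 ≤ a) (hb : 0 ≤ b)
    (hc : 0 ≤ c) (hd : 1 < d) (hγ : γ < 1)
    (h_small : ∀ r, 0 < r → r < 1 → ν (closedBall x r) ≤ ENNReal.ofReal (a * r ^ d))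
    (h_large : ∀ r, 1 ≤ r → ν (closedBall x r) ≤ ENNReal.ofReal (b + c * r ^ γ)) :
    ∫⁻ y, ENNReal.ofReal ‖x - y‖⁻¹ ∂ν ≤ ENNReal.ofReal (b + c / (1 - γ) + a / (d - 1)) := by
  have hsub {t : ℝ} (ht : 0 < t) : {y | t < ‖x - y‖⁻¹} ⊆ closedBall x t⁻¹ := fun y hy => by
    rw [mem_closedBall, dist_comm, dist_eq_norm]
    exact ((lt_inv_comm₀ ht (inv_pos.1 (ht.trans hy))).1 hy).le
  rw [lintegral_eq_lintegral_meas_lt ν (f := fun y => ‖x - y‖⁻¹)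
      (ae_of_all _ fun y => inv_nonneg.2 (norm_nonneg _))
      (continuous_const.sub continuous_id).norm.measurable.inv.aemeasurable,
    ← Ioc_union_Ioi_eq_Ioi zero_le_one, lintegral_union measurableSet_Ioi (Ioc_disjoint_Ioi le_rfl)]
  have hnear : ∫⁻ t in Ioc 0 1, ν {y | t < ‖x - y‖⁻¹} ≤ ENNReal.ofReal (b + c / (1 - γ)) := by
    rw [← lintegral_Ioc_zero_one_ofReal_const_add_mul_rpow hb hc hγ]
    refine setLIntegral_mono (by fun_prop) fun t ht => (measure_mono (hsub ht.1)).trans ?_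
    rw [rpow_neg ht.1.le, ← inv_rpow ht.1.le]
    exact h_large _ (one_le_inv₀ ht.1 |>.2 ht.2)
  have hfar : ∫⁻ t in Ioi 1, ν {y | t < ‖x - y‖⁻¹} ≤ ENNReal.ofReal (a / (d - 1)) := by
    rw [← lintegral_Ioi_one_ofReal_mul_rpow_neg ha hd]
    refine setLIntegral_mono (by fun_prop) fun t ht => ?_
    have ht0 : 0 < t := zero_lt_one.trans ht
    refine (measure_mono (hsub ht0)).trans ?_
    rw [rpow_neg ht0.le, ← inv_rpow ht0.le]
    exact h_small _ (inv_pos.2 ht0) (inv_lt_one_of_one_lt₀ ht)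
  have : 0 < 1 - γ := by linarith
  have : 0 < d - 1 := by linarith
  rw [ENNReal.ofReal_add (by positivity) (by positivity)]
  exact add_le_add hnear hfar

lemma integral_div_norm_sub_le_of_lintegral_le {E : Type*} [NormedAddCommGroup E] [MeasureSpace E]
    [OpensMeasurableSpace E] {ρ : E → ℝ} (hρm : Measurable ρ) (hρ0 : ∀ y, 0 ≤ ρ y) (x : E) {C : ℝ}
    (hC : 0 ≤ C)
    (h : ∫⁻ y, ENNReal.ofReal ‖x - y‖⁻¹ ∂volume.withDensity (fun y => ENNReal.ofReal (ρ y))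
      ≤ ENNReal.ofReal C) :
    ∫ y, ρ y / ‖x - y‖ ≤ C := by
  have hdist : Measurable fun y => ‖x - y‖ := (continuous_const.sub continuous_id).norm.measurable
  rw [integral_eq_lintegral_of_nonneg_ae (ae_of_all _ fun y => div_nonneg (hρ0 y) (norm_nonneg _))
    (hρm.div hdist).aestronglyMeasurable]
  refine ENNReal.toReal_le_of_le_ofReal hC (le_of_eq_of_le ?_ h)
  have hinv : Measurable fun y => ENNReal.ofReal ‖x - y‖⁻¹ := hdist.inv.ennreal_ofReal
  rw [lintegral_withDensity_eq_lintegral_mul _ hρm.ennreal_ofReal hinv]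
  simp only [Pi.mul_apply, div_eq_mul_inv, ENNReal.ofReal_mul (hρ0 _)]

def slab (i : ℤ) : Set E3 := {x | (i : ℝ) ≤ x 0 ∧ x 0 ≤ (i : ℝ) + 1}

lemma measurableSet_slab (i : ℤ) : MeasurableSet (slab i) := by
  have h : Measurable fun x : E3 => x 0 := by fun_prop
  exact (measurableSet_le measurable_const h).inter (measurableSet_le h measurable_const)

lemma measurableSet_cyl (A : ℝ) : MeasurableSet (cyl A) :=
  measurableSet_lt (by fun_prop) measurable_const

lemma slab_inter_cyl_subset_closedBall {A : ℝ} (hA : 0 ≤ A) (i : ℤ) :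
    slab i ∩ cyl A ⊆ closedBall (EuclideanSpace.single 0 (i : ℝ)) (1 + A) := by
  rintro y ⟨⟨hi, hi1⟩, hy⟩
  replace hy : y 1 ^ 2 + y 2 ^ 2 < A ^ 2 := hy
  rw [mem_closedBall, EuclideanSpace.dist_eq, Fin.sum_univ_three]
  refine sqrt_le_iff.2 ⟨by positivity, ?_⟩
  simp only [PiLp.single_apply, if_pos, Fin.reduceEq, if_false, Real.dist_eq, sq_abs, sub_zero]
  nlinarith

lemma volume_slab_inter_cyl_le {A : ℝ} (hA : 0 ≤ A) (i : ℤ) :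
    volume (slab i ∩ cyl A) ≤ ENNReal.ofReal ((1 + A) ^ 3 * (π * 4 / 3)) := by
  refine (measure_mono (slab_inter_cyl_subset_closedBall hA i)).trans_eq ?_
  rw [EuclideanSpace.volume_closedBall_fin_three, ← ENNReal.ofReal_pow (by linarith),
    ← ENNReal.ofReal_mul (by positivity)]

lemma closedBall_subset_biUnion_slab (x : E3) (r : ℝ) :
    closedBall x r ⊆ ⋃ i ∈ Finset.Ico ⌊x 0 - r⌋ (⌊x 0 - r⌋ + (⌈2 * r⌉₊ + 1 : ℕ)), slab i := by
  intro y hy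
  have hy0 : |y 0 - x 0| ≤ r :=
    (PiLp.norm_apply_le (y - x) 0).trans (by rwa [← dist_eq_norm, ← mem_closedBall])
  rw [abs_le] at hy0
  simp only [mem_iUnion, Finset.mem_Ico]
  refine ⟨⌊y 0⌋, ⟨Int.floor_le_floor (by linarith), ?_⟩, Int.floor_le _,
    (Int.lt_floor_add_one _).le⟩
  rw [Int.floor_lt]
  push_cast
  linarith [hy0.2, Int.sub_one_lt_floor (x 0 - r), Nat.le_ceil (2 * r)]

theorem measure_closedBall_le_of_slab_le (ν : Measure E3) {β b K : ℝ} (hβ0 : 0 ≤ β)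
    (hβ1 : β < 1) (hb : 0 ≤ b) (hK : 0 ≤ K) (h_zero : ν (slab 0) ≤ ENNReal.ofReal b)
    (h_slab : ∀ i : ℤ, i ≠ 0 → ν (slab i) ≤ ENNReal.ofReal (K * |(i : ℝ)| ^ (-β)))
    (x : E3) {r : ℝ} (hr : 1 ≤ r) :
    ν (closedBall x r) ≤ ENNReal.ofReal (b + 3 * K * 4 ^ (1 - β) / (1 - β) * r ^ (1 - β)) := by
  have hβ : 0 < 1 - β := by linarith
  set L := ⌊x 0 - r⌋
  set n := ⌈2 * r⌉₊ + 1
  have hn : (n : ℝ) ≤ 4 * r := by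
    have := Nat.ceil_lt_add_one (by linarith : (0 : ℝ) ≤ 2 * r)
    push_cast [n]
    linarith
  have hsum : ∑ i ∈ (Finset.Ico L (L + n)).erase 0, ν (slab i)
      ≤ ENNReal.ofReal (3 * K * 4 ^ (1 - β) / (1 - β) * r ^ (1 - β)) :=
    calc _ ≤ ∑ i ∈ (Finset.Ico L (L + n)).erase 0, ENNReal.ofReal (K * |(i : ℝ)| ^ (-β)) :=
          Finset.sum_le_sum fun i hi => h_slab i (Finset.ne_of_mem_erase hi)
      _ = ENNReal.ofReal (K * ∑ i ∈ (Finset.Ico L (L + n)).erase 0, |(i : ℝ)| ^ (-β)) := by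
          rw [Finset.mul_sum, ENNReal.ofReal_sum_of_nonneg fun i _ => by positivity]
      _ ≤ _ := by
          refine ENNReal.ofReal_le_ofReal ?_
          calc _ ≤ K * (3 * ((n : ℝ) ^ (1 - β) / (1 - β))) := by
                gcongr; exact sum_Ico_erase_zero_abs_rpow_neg_le hβ0 hβ1 L n
            _ ≤ K * (3 * ((4 * r) ^ (1 - β) / (1 - β))) := by gcongr
            _ = _ := by rw [mul_rpow (by norm_num) (by linarith)]; ring
  calc ν (closedBall x r) ≤ ∑ i ∈ Finset.Ico L (L + n), ν (slab i) :=
        (measure_mono (closedBall_subset_biUnion_slab x r)).trans (measure_biUnion_finset_le _ _)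
    _ ≤ ∑ i ∈ insert 0 ((Finset.Ico L (L + n)).erase 0), ν (slab i) :=
        Finset.sum_le_sum_of_subset (Finset.insert_erase_subset 0 _)
    _ = ν (slab 0) + ∑ i ∈ (Finset.Ico L (L + n)).erase 0, ν (slab i) :=
        Finset.sum_insert (Finset.notMem_erase 0 _)
    _ ≤ _ := add_le_add h_zero hsum
    _ = _ := (ENNReal.ofReal_add hb (by positivity)).symm

lemma withDensity_ofReal_le_of_setIntegral_le {α : Type*} [MeasurableSpace α] {μ : Measure α}
    {f : α → ℝ} (hf : Measurable f) (hf0 : ∀ y, 0 ≤ f y) {s : Set α} (hs : MeasurableSet s)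
    (hfin : μ.withDensity (fun y => ENNReal.ofReal (f y)) s ≠ ⊤) {K : ℝ}
    (h : ∫ y in s, f y ∂μ ≤ K) :
    μ.withDensity (fun y => ENNReal.ofReal (f y)) s ≤ ENNReal.ofReal K := by
  rw [withDensity_apply _ hs] at hfin ⊢
  have hint : IntegrableOn f s μ :=
    ⟨hf.aestronglyMeasurable, (hasFiniteIntegral_iff_ofReal (ae_of_all _ hf0)).2 hfin.lt_top⟩
  rw [← ofReal_integral_eq_lintegral_ofReal hint (ae_of_all _ hf0)]
  exact ENNReal.ofReal_le_ofReal h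

section ChargeDensity

variable {A M : ℝ} {ρ : E3 → ℝ}

lemma withDensity_le_mul_volume_inter_cyl (hρM : ∀ y, ρ y ≤ M) (hρA : ∀ y, y ∉ cyl A → ρ y = 0)
    (s : Set E3) :
    volume.withDensity (fun y => ENNReal.ofReal (ρ y)) s
      ≤ ENNReal.ofReal M * volume (s ∩ cyl A) := by
  have hle (y : E3) : ENNReal.ofReal (ρ y) ≤ (cyl A).indicator (fun _ => ENNReal.ofReal M) y := by
    by_cases hy : y ∈ cyl A
    · simpa [hy] using ENNReal.ofReal_le_ofReal (hρM y)
    · simp [hy, hρA y hy]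
  rw [withDensity_apply']
  calc _ ≤ ∫⁻ y in s, (cyl A).indicator (fun _ => ENNReal.ofReal M) y := lintegral_mono hle
    _ = _ := by
      rw [lintegral_indicator_const (measurableSet_cyl A),
        Measure.restrict_apply (measurableSet_cyl A), inter_comm]

lemma withDensity_slab_le (hA : 0 ≤ A) (hM : 0 ≤ M) (hρM : ∀ y, ρ y ≤ M)
    (hρA : ∀ y, y ∉ cyl A → ρ y = 0) (i : ℤ) :
    volume.withDensity (fun y => ENNReal.ofReal (ρ y)) (slab i)
      ≤ ENNReal.ofReal (M * ((1 + A) ^ 3 * (π * 4 / 3))) := by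
  refine (withDensity_le_mul_volume_inter_cyl hρM hρA _).trans ?_
  rw [ENNReal.ofReal_mul hM]
  gcongr
  exact volume_slab_inter_cyl_le hA i

lemma withDensity_closedBall_le (hM : 0 ≤ M) (hρM : ∀ y, ρ y ≤ M)
    (hρA : ∀ y, y ∉ cyl A → ρ y = 0) (x : E3) {r : ℝ} (hr : 0 ≤ r) :
    volume.withDensity (fun y => ENNReal.ofReal (ρ y)) (closedBall x r)
      ≤ ENNReal.ofReal (M * (π * 4 / 3) * r ^ (3 : ℝ)) :=
  calc _ ≤ ENNReal.ofReal M * volume (closedBall x r ∩ cyl A) :=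
        withDensity_le_mul_volume_inter_cyl hρM hρA _
    _ ≤ ENNReal.ofReal M * volume (closedBall x r) := by gcongr; exact inter_subset_left
    _ = _ := by
      rw [EuclideanSpace.volume_closedBall_fin_three, rpow_ofNat, ← ENNReal.ofReal_pow hr,
        ← ENNReal.ofReal_mul (by positivity), ← ENNReal.ofReal_mul hM]
      ring_nf

end ChargeDensity

/-- A bounded density supported in the cylinder with decaying unit-slab integrals has a
uniformly bounded Coulomb potential: `sup_x ∫ ρ(y)/|x−y| dy ≤ C`. -/
theorem potential_bound
    (A M C₁ α : ℝ) (hA : 0 < A) (hM : 0 < M) (hC₁ : 0 < C₁) (hα0 : 0 < α) (hα1 : α ≤ 1) :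
    ∃ C : ℝ, 0 < C ∧
      ∀ ρ : E3 → ℝ, Measurable ρ → (∀ x, 0 ≤ ρ x) → (∀ x, ρ x ≤ M) →
        (∀ x, x ∉ cyl A → ρ x = 0) →
        (∀ i : ℤ, i ≠ 0 →
          (∫ x in {x : E3 | (i:ℝ) ≤ x 0 ∧ x 0 ≤ (i:ℝ) + 1}, ρ x) ≤ C₁ / |(i:ℝ)| ^ α) →
        ∀ x : E3, (∫ y : E3, ρ y / ‖x - y‖) ≤ C := by
  set β := α / 2 with hβ
  have hβ0 : 0 < β := by positivity
  have hβ1 : β < 1 := by linarith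
  have hc : 0 < 3 * C₁ * 4 ^ (1 - β) / (1 - β) := div_pos (by positivity) (by linarith)
  refine ⟨M * ((1 + A) ^ 3 * (π * 4 / 3)) + 3 * C₁ * 4 ^ (1 - β) / (1 - β) / β
    + M * (π * 4 / 3) / 2, by positivity, ?_⟩
  intro ρ hρm hρ0 hρM hρA hslab x
  have hν_slab := withDensity_slab_le hA.le hM.le hρM hρA
  have hν_decay (i : ℤ) (hi : i ≠ 0) : volume.withDensity (fun y => ENNReal.ofReal (ρ y)) (slab i)
      ≤ ENNReal.ofReal (C₁ * |(i : ℝ)| ^ (-β)) := by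
    refine withDensity_ofReal_le_of_setIntegral_le hρm hρ0 (measurableSet_slab i)
      (ne_top_of_le_ne_top ENNReal.ofReal_ne_top (hν_slab i)) ((hslab i hi).trans ?_)
    have h1 : 1 ≤ |(i : ℝ)| := by exact_mod_cast Int.one_le_abs hi
    rw [div_eq_mul_inv, ← rpow_neg (abs_nonneg _)]
    gcongr
    linarith
  refine integral_div_norm_sub_le_of_lintegral_le hρm hρ0 x (by positivity)
    ((lintegral_ofReal_inv_norm_sub_le _ x (by positivity) (by positivity) hc.le (d := 3)
      (γ := 1 - β) (by norm_num) (by linarith)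
      (fun r hr _ => withDensity_closedBall_le hM.le hρM hρA x hr.le)
      (fun r hr => measure_closedBall_le_of_slab_le _ hβ0.le hβ1 (by positivity) hC₁.le
        (hν_slab 0) hν_decay x hr)).trans_eq (by rw [sub_sub_cancel]; norm_num))
end
end

section
/- There is a universal constant C such that for every u ∈ ℝ, every δ > 0 and every measurable g : ℝ³ → [0,M] that vanishes whenever |v₁ − u| > δ, one has ∫_{ℝ³} g(v) dv ≤ C (M δ)^{1/2} (∫_{ℝ³} |v|² g(v) dv)^{1/2}. -/
/-!
On the box `S = [u - δ, u + δ] × [-a, a]²` we use `g ≤ M`, and a point of the slab outside `S`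
has `|v| > a`, so there `g ≤ |v|² g / a²`. Hence `∫ g ≤ 8 M δ a² + a⁻² ∫ |v|² g` for every
`a > 0`, and optimizing in `a` gives the bound with `C = 2 √8`.
-/

noncomputable section
open MeasureTheory Real Set

theorem le_two_mul_sqrt_mul_sqrt_of_forall_le {x A B : ℝ} (hA : 0 < A) (hB : 0 ≤ B)
    (h : ∀ t > 0, x ≤ A * t + B / t) : x ≤ 2 * √A * √B := by
  refine le_of_forall_pos_le_add fun ε hε => ?_
  have hsA : 0 < √A := sqrt_pos.mpr hA
  -- a near-optimal `t = s / √A`, which avoids treating `B = 0` separately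
  set s := √B + ε / √A with hs
  have hs_pos : 0 < s := by positivity
  have hB_le : B / s ≤ √B := by
    rw [div_le_iff₀ hs_pos]
    calc B = √B * √B := (mul_self_sqrt hB).symm
      _ ≤ √B * s := by gcongr; exact le_add_of_nonneg_right (by positivity)
  calc x ≤ A * (s / √A) + B / (s / √A) := h _ (by positivity)
    _ = √A * s + √A * (B / s) := by
      field_simp; rw [sq_sqrt hA.le]; ring
    _ ≤ √A * s + √A * √B := by gcongr
    _ = 2 * √A * √B + ε := by rw [hs]; field_simp; ring

theorem integral_le_mul_measureReal_add_inv_mul_integral {α : Type*} [MeasurableSpace α]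
    {μ : Measure α} {f w : α → ℝ} {S : Set α} {M c : ℝ} (hS : MeasurableSet S) (hμS : μ S ≠ ⊤)
    (hf : AEStronglyMeasurable f μ) (hf0 : ∀ x, 0 ≤ f x) (hw0 : ∀ x, 0 ≤ w x) (hc : 0 < c)
    (hfM : ∀ x ∈ S, f x ≤ M) (hout : ∀ x ∉ S, f x ≠ 0 → c ≤ w x)
    (hwf : Integrable (fun x => w x * f x) μ) :
    ∫ x, f x ∂μ ≤ M * μ.real S + c⁻¹ * ∫ x, w x * f x ∂μ := by
  have hpt : ∀ x, f x ≤ S.indicator (fun _ => M) x + c⁻¹ * (w x * f x) := by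
    intro x
    have hwf0 : 0 ≤ c⁻¹ * (w x * f x) := by have := hf0 x; have := hw0 x; positivity
    by_cases hx : x ∈ S
    · rw [indicator_of_mem hx]; linarith [hfM x hx]
    rw [indicator_of_notMem hx, zero_add]
    by_cases hfx : f x = 0
    · exact hfx ▸ hwf0
    calc f x = c⁻¹ * (c * f x) := by field_simp
      _ ≤ c⁻¹ * (w x * f x) := by gcongr; exacts [hf0 x, hout x hx hfx]
  have hind : Integrable (S.indicator fun _ => M) μ :=
    (integrableOn_const hμS).integrable_indicator hS
  have hdom := hind.add (hwf.const_mul c⁻¹)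
  calc ∫ x, f x ∂μ ≤ ∫ x, (S.indicator (fun _ => M) x + c⁻¹ * (w x * f x)) ∂μ :=
        integral_mono (hdom.mono' hf (.of_forall fun x => by
          rw [norm_of_nonneg (hf0 x)]; exact hpt x)) hdom hpt
    _ = M * μ.real S + c⁻¹ * ∫ x, w x * f x ∂μ := by
        rw [integral_add hind (hwf.const_mul _), integral_const_mul, integral_indicator_const M hS,
          smul_eq_mul, mul_comm]

def slabBox (n : ℕ) (u δ a : ℝ) : Set (EuclideanSpace ℝ (Fin (n + 1))) :=
  WithLp.ofLp ⁻¹' univ.pi (Fin.cons (Icc (u - δ) (u + δ)) fun _ => Icc (-a) a)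

section slabBox

variable {n : ℕ} {u δ a : ℝ}

theorem measurableSet_pi_cons_Icc :
    MeasurableSet
      (univ.pi (Fin.cons (Icc (u - δ) (u + δ)) fun _ => Icc (-a) a : Fin (n + 1) → Set ℝ)) :=
  .univ_pi fun i => by cases i using Fin.cases <;> exact measurableSet_Icc

theorem measurableSet_slabBox : MeasurableSet (slabBox n u δ a) :=
  (PiLp.volume_preserving_ofLp _).measurable measurableSet_pi_cons_Icc

theorem volume_slabBox (hδ : 0 ≤ δ) (ha : 0 ≤ a) :
    volume (slabBox n u δ a) = ENNReal.ofReal (2 * δ * (2 * a) ^ n) := by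
  rw [slabBox, (PiLp.volume_preserving_ofLp _).measure_preimage
    measurableSet_pi_cons_Icc.nullMeasurableSet, volume_pi_pi, Fin.prod_univ_succ]
  simp only [Fin.cons_zero, Fin.cons_succ, Real.volume_Icc, Finset.prod_const, Finset.card_univ,
    Fintype.card_fin]
  rw [show u + δ - (u - δ) = 2 * δ by ring, show a - -a = 2 * a by ring,
    ← ENNReal.ofReal_pow (by positivity), ← ENNReal.ofReal_mul (by positivity)]

theorem mem_slabBox_of_norm_le {v : EuclideanSpace ℝ (Fin (n + 1))} (hv0 : |v 0 - u| ≤ δ)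
    (hv : ‖v‖ ≤ a) : v ∈ slabBox n u δ a := by
  simp only [slabBox, mem_preimage, mem_univ_pi]
  intro i
  cases i using Fin.cases with
  | zero => simpa [abs_sub_le_iff, sub_le_iff_le_add, add_comm, and_comm] using hv0
  | succ i => simpa [abs_le] using (PiLp.norm_apply_le v i.succ).trans hv

end slabBox

theorem integral_le_of_eq_zero_off_slab {n : ℕ} {g : EuclideanSpace ℝ (Fin (n + 1)) → ℝ}
    {M u δ a : ℝ} (hδ : 0 ≤ δ) (ha : 0 < a) (hg : Measurable g) (hg0 : ∀ v, 0 ≤ g v)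
    (hgM : ∀ v, g v ≤ M) (hsupp : ∀ v, δ < |v 0 - u| → g v = 0)
    (hint : Integrable (fun v => ‖v‖ ^ 2 * g v)) :
    ∫ v, g v ≤ M * (2 * δ * (2 * a) ^ n) + (a ^ 2)⁻¹ * ∫ v, ‖v‖ ^ 2 * g v := by
  have hvol := volume_slabBox (n := n) (u := u) hδ ha.le
  have hout : ∀ v ∉ slabBox n u δ a, g v ≠ 0 → a ^ 2 ≤ ‖v‖ ^ 2 := fun v hv hgv => by
    by_contra! hlt
    exact hv (mem_slabBox_of_norm_le (not_lt.mp (mt (hsupp v) hgv))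
      (lt_of_pow_lt_pow_left₀ 2 ha.le hlt).le)
  have h := integral_le_mul_measureReal_add_inv_mul_integral measurableSet_slabBox
    (hvol ▸ ENNReal.ofReal_ne_top) hg.aestronglyMeasurable hg0 (fun v => sq_nonneg ‖v‖)
    (pow_pos ha 2) (fun v _ => hgM v) hout hint
  rwa [measureReal_def, hvol, ENNReal.toReal_ofReal (by positivity)] at h

/-- Slab interpolation: if `0 ≤ g ≤ M` vanishes outside the slab `{|v₁ - u| ≤ δ}`, then
`∫ g ≤ C (Mδ)^{1/2} (∫ |v|² g)^{1/2}` with a universal constant `C`. -/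
theorem slab_moment_interpolation :
    ∃ C : ℝ, 0 < C ∧
      ∀ M u δ : ℝ, 0 < M → 0 < δ →
        ∀ g : E3 → ℝ, Measurable g → (∀ v, 0 ≤ g v) → (∀ v, g v ≤ M) →
          (∀ v : E3, δ < |v 0 - u| → g v = 0) →
          Integrable (fun v : E3 => ‖v‖ ^ 2 * g v) →
          (∫ v : E3, g v) ≤
            C * (M * δ) ^ ((1:ℝ)/2) * (∫ v : E3, ‖v‖ ^ 2 * g v) ^ ((1:ℝ)/2) := by
  refine ⟨2 * √8, by positivity, fun M u δ hM hδ g hg hg0 hgM hsupp hint => ?_⟩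
  have hmoment : 0 ≤ ∫ v : E3, ‖v‖ ^ 2 * g v :=
    integral_nonneg fun v => mul_nonneg (sq_nonneg _) (hg0 v)
  have hsplit : ∀ t > 0, ∫ v : E3, g v ≤ 8 * (M * δ) * t + (∫ v : E3, ‖v‖ ^ 2 * g v) / t :=
    fun t ht => by
      have := integral_le_of_eq_zero_off_slab (n := 2) hδ.le (sqrt_pos.mpr ht) hg hg0 hgM
        hsupp hint
      rwa [mul_pow, sq_sqrt ht.le, inv_mul_eq_div,
        show M * (2 * δ * (2 ^ 2 * t)) = 8 * (M * δ) * t by ring] at this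
  calc ∫ v : E3, g v ≤ 2 * √(8 * (M * δ)) * √(∫ v : E3, ‖v‖ ^ 2 * g v) :=
        le_two_mul_sqrt_mul_sqrt_of_forall_le (by positivity) hmoment hsplit
    _ = _ := by rw [sqrt_mul (by norm_num), sqrt_eq_rpow, sqrt_eq_rpow, sqrt_eq_rpow]; ring
end
end

section
/- Let h : [0,A²) → ℝ be continuous with primitive H, let E : [0,T] → ℝ³ be continuous, and let (X,V) : [0,T] → ℝ³×ℝ³ be a C¹ solution of Ẋ(t) = V(t), V̇(t) = E(t) + V(t) × B(X(t)), where B(x) = (h(x₂²+x₃²), 0, 0), such that r(t)² := X₂(t)² + X₃(t)² < A² for all t ∈ [0,T]. Then for every t ∈ [0,T]: (a) the pointwise identity h(r(t)²)(V₂(t)X₂(t) + V₃(t)X₃(t)) = V̇₂(t)X₃(t) − V̇₃(t)X₂(t) + X₂(t)E₃(t) − X₃(t)E₂(t) holds; (b) ½[H(r(t)²) − H(r(0)²)] = [V₂(t)X₃(t) − V₃(t)X₂(t)] − [V₂(0)X₃(0) − V₃(0)X₂(0)] + ∫₀ᵗ (X₂(s)E₃(s) − X₃(s)E₂(s)) ds;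 and consequently (c) H(r(t)²) ≤ H(r(0)²) + 4A sup_{s∈[0,t]} |V(s)| + 2A ∫₀ᵗ |E(s)| ds. -/
noncomputable section
open MeasureTheory Real Set

/-!
Write `L = V₂X₃ − V₃X₂` (coordinates `1, 2` of `Fin 3`). Because `B` points along the axis, the
Lorentz force only rotates the transverse velocity, and differentiating `L` turns `V × B` into
`h(r²) (V₂X₂ + V₃X₃) = h(r²) (r²)'/2`; this is (a). Since `H' = h`, the function `½ H(r²) − L`
then has derivative `X₂E₃ − X₃E₂`, the axial torque of `E`, and the fundamental theorem of
calculus gives (b). Inside the cylinder `r < A`, Cauchy–Schwarz in the transverse plane bounds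
`|L|` by `A |V|` and the torque by `A |E|`, which turns (b) into (c).
-/

theorem EuclideanSpace.sq_add_sq_le_norm_sq {ι : Type*} [Fintype ι] (v : EuclideanSpace ℝ ι)
    {i j : ι} (hij : i ≠ j) : v i ^ 2 + v j ^ 2 ≤ ‖v‖ ^ 2 := by
  classical
  rw [EuclideanSpace.norm_sq_eq]
  have := Finset.sum_le_sum_of_subset_of_nonneg (Finset.subset_univ {i, j})
    (fun k _ _ => sq_nonneg ‖v k‖)
  simpa [Finset.sum_pair hij] using this

theorem abs_mul_sub_mul_le_mul {a b c d M N : ℝ} (hM : 0 ≤ M) (hN : 0 ≤ N)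
    (hab : a ^ 2 + b ^ 2 ≤ M ^ 2) (hcd : c ^ 2 + d ^ 2 ≤ N ^ 2) : |a * d - b * c| ≤ M * N := by
  refine abs_le_of_sq_le_sq ?_ (mul_nonneg hM hN)
  have lagrange :
      (a * d - b * c) ^ 2 + (a * c + b * d) ^ 2 = (a ^ 2 + b ^ 2) * (c ^ 2 + d ^ 2) := by
    ring
  nlinarith [sq_nonneg (a * c + b * d), mul_le_mul hab hcd (by positivity) (sq_nonneg M)]

theorem IsCompact.le_ciSup_of_continuousOn {α β : Type*} [TopologicalSpace α]
    [ConditionallyCompleteLinearOrder β] [TopologicalSpace β] [ClosedIciTopology β] {K : Set α}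
    {f : α → β} (hK : IsCompact K) (hf : ContinuousOn f K) {x : α} (hx : x ∈ K) : f x ≤ ⨆ y : K, f y :=
  le_ciSup (f := fun y : K => f y) (by simpa [image_eq_range] using hK.bddAbove_image hf) ⟨x, hx⟩

theorem intervalIntegral.integral_eq_sub_of_hasDerivWithinAt_Icc {E : Type*} [NormedAddCommGroup E]
    [NormedSpace ℝ E] [CompleteSpace E] {f g : ℝ → E} {a b t : ℝ}
    (hf : ∀ s ∈ Icc a b, HasDerivWithinAt f (g s) (Icc a b) s) (hg : ContinuousOn g (Icc a b))
    (ht : t ∈ Icc a b) : ∫ s in a..t, g s = f t - f a := by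
  have hsub : Icc a t ⊆ Icc a b := Icc_subset_Icc_right ht.2
  refine integral_eq_sub_of_hasDeriv_right_of_le ht.1
    (fun s hs => (hf s (hsub hs)).continuousWithinAt.mono hsub) (fun s hs => ?_)
    ((hg.mono hsub).intervalIntegrable_of_Icc ht.1)
  exact ((hf s (hsub (Ioo_subset_Icc_self hs))).hasDerivAt
    (Icc_mem_nhds hs.1 (hs.2.trans_le ht.2))).hasDerivWithinAt

theorem HasDerivAt.euclideanSpace_apply {ι : Type*} [Fintype ι] {X : ℝ → EuclideanSpace ℝ ι}
    {v : EuclideanSpace ℝ ι} {t : ℝ} (hX : HasDerivAt X v t) (i : ι) :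
    HasDerivAt (fun s => X s i) (v i) t :=
  (PiLp.hasFDerivAt_apply (𝕜 := ℝ) 2 (X t) i).comp_hasDerivAt t hX

theorem HasDerivAt.apply_sq_add_apply_sq {ι : Type*} [Fintype ι] {X : ℝ → EuclideanSpace ℝ ι}
    {v : EuclideanSpace ℝ ι} {t : ℝ} (hX : HasDerivAt X v t) (i j : ι) :
    HasDerivAt (fun s => X s i ^ 2 + X s j ^ 2) (2 * (X t i * v i + X t j * v j)) t := by
  refine (((hX.euclideanSpace_apply i).fun_pow 2).fun_add
    ((hX.euclideanSpace_apply j).fun_pow 2)).congr_deriv ?_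
  push_cast
  ring

theorem HasDerivAt.mul_apply_sub_mul_apply {ι : Type*} [Fintype ι] {X V : ℝ → EuclideanSpace ℝ ι}
    {a : EuclideanSpace ℝ ι} {t : ℝ} (hX : HasDerivAt X (V t) t) (hV : HasDerivAt V a t) (i j : ι) :
    HasDerivAt (fun s => V s i * X s j - V s j * X s i) (a i * X t j - a j * X t i) t := by
  refine (((hV.euclideanSpace_apply i).fun_mul (hX.euclideanSpace_apply j)).fun_sub
    ((hV.euclideanSpace_apply j).fun_mul (hX.euclideanSpace_apply i))).congr_deriv ?_
  ring

theorem abs_mul_sub_mul_le_of_mem_cyl {A : ℝ} (hA : 0 ≤ A) {x : E3} (hx : x ∈ cyl A) (v : E3) :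
    |v 1 * x 2 - v 2 * x 1| ≤ A * ‖v‖ := by
  rw [mul_comm A]
  exact abs_mul_sub_mul_le_mul (norm_nonneg v) hA
    (EuclideanSpace.sq_add_sq_le_norm_sq v (by decide)) hx.le

theorem integral_mul_sub_mul_le_of_mem_cyl {A t : ℝ} {X eE : ℝ → E3} (hA : 0 ≤ A) (ht : 0 ≤ t)
    (hX : ∀ s ∈ Icc 0 t, X s ∈ cyl A)
    (hg : ContinuousOn (fun s => X s 1 * eE s 2 - X s 2 * eE s 1) (Icc 0 t)) (heE : Continuous eE) :
    ∫ s in (0:ℝ)..t, (X s 1 * eE s 2 - X s 2 * eE s 1) ≤ A * ∫ s in (0:ℝ)..t, ‖eE s‖ := by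
  rw [← intervalIntegral.integral_const_mul]
  refine intervalIntegral.integral_mono_on ht (hg.intervalIntegrable_of_Icc ht)
    ((by fun_prop : Continuous fun s => A * ‖eE s‖).intervalIntegrable _ _)
    fun s hs => (le_abs_self _).trans ?_
  rw [abs_sub_comm, mul_comm (X s 1), mul_comm (X s 2)]
  exact abs_mul_sub_mul_le_of_mem_cyl hA (hX s hs) (eE s)

theorem axial_lorentz_force_identity (b : ℝ) (x v e : E3) :
    b * (v 1 * x 1 + v 2 * x 2) =
      (e + cross3 v (WithLp.toLp 2 ![b, 0, 0])) 1 * x 2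
        - (e + cross3 v (WithLp.toLp 2 ![b, 0, 0])) 2 * x 1 + x 1 * e 2 - x 2 * e 1 := by
  simp [cross3]
  ring

theorem hasDerivWithinAt_half_primitive_sub_angularMomentum {S D : Set ℝ} {h H : ℝ → ℝ}
    {eE X V : ℝ → E3} (hH : ∀ u ∈ D, HasDerivWithinAt H (h u) D u)
    (hX : ∀ t ∈ S, HasDerivAt X (V t) t)
    (hV : ∀ t ∈ S,
      HasDerivAt V (eE t + cross3 (V t) (WithLp.toLp 2 ![h (X t 1 ^ 2 + X t 2 ^ 2), 0, 0])) t)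
    (hD : ∀ t ∈ S, X t 1 ^ 2 + X t 2 ^ 2 ∈ D) {t : ℝ} (ht : t ∈ S) :
    HasDerivWithinAt
      (fun s => (1 / 2) * H (X s 1 ^ 2 + X s 2 ^ 2) - (V s 1 * X s 2 - V s 2 * X s 1))
      (X t 1 * eE t 2 - X t 2 * eE t 1) S t := by
  have hHr := (hH _ (hD t ht)).comp t ((hX t ht).apply_sq_add_apply_sq 1 2).hasDerivWithinAt hD
  refine ((hHr.const_mul (1 / 2)).fun_sub
    ((hX t ht).mul_apply_sub_mul_apply (hV t ht) 1 2).hasDerivWithinAt).congr_deriv ?_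
  linear_combination axial_lorentz_force_identity (h (X t 1 ^ 2 + X t 2 ^ 2)) (X t) (V t) (eE t)

theorem confinement_identity_general
    (A T : ℝ) (hA : 0 < A)
    (h H : ℝ → ℝ)
    (hH : ∀ u ∈ Ico (0:ℝ) (A ^ 2), HasDerivWithinAt H (h u) (Ico 0 (A ^ 2)) u)
    (eE : ℝ → E3) (heE : Continuous eE)
    (X V : ℝ → E3)
    (hX : ∀ t ∈ Icc (0:ℝ) T, HasDerivAt X (V t) t)
    (hV : ∀ t ∈ Icc (0:ℝ) T,
      HasDerivAt V (eE t + cross3 (V t) (WithLp.toLp 2 ![h (X t 1 ^ 2 + X t 2 ^ 2), 0, 0])) t)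
    (hconf : ∀ t ∈ Icc (0:ℝ) T, X t 1 ^ 2 + X t 2 ^ 2 < A ^ 2) :
    ∀ t ∈ Icc (0:ℝ) T,
      -- (a) pointwise identity
      (h (X t 1 ^ 2 + X t 2 ^ 2) * (V t 1 * X t 1 + V t 2 * X t 2) =
        (eE t + cross3 (V t) (WithLp.toLp 2 ![h (X t 1 ^ 2 + X t 2 ^ 2), 0, 0])) 1 * X t 2
          - (eE t + cross3 (V t) (WithLp.toLp 2 ![h (X t 1 ^ 2 + X t 2 ^ 2), 0, 0])) 2 * X t 1
          + X t 1 * eE t 2 - X t 2 * eE t 1) ∧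
      -- (b) integrated identity
      ((1/2) * (H (X t 1 ^ 2 + X t 2 ^ 2) - H (X 0 1 ^ 2 + X 0 2 ^ 2)) =
        (V t 1 * X t 2 - V t 2 * X t 1) - (V 0 1 * X 0 2 - V 0 2 * X 0 1)
          + ∫ s in (0:ℝ)..t, (X s 1 * eE s 2 - X s 2 * eE s 1)) ∧
      -- (c) consequence
      (H (X t 1 ^ 2 + X t 2 ^ 2) ≤ H (X 0 1 ^ 2 + X 0 2 ^ 2)
          + 4 * A * (⨆ s : Icc (0:ℝ) t, ‖V (s : ℝ)‖)
          + 2 * A * ∫ s in (0:ℝ)..t, ‖eE s‖) := by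
  intro t ht
  have hsub : Icc 0 t ⊆ Icc 0 T := Icc_subset_Icc_right ht.2
  have hXcont : ContinuousOn X (Icc 0 T) := fun s hs => (hX s hs).continuousAt.continuousWithinAt
  have hVcont : ContinuousOn V (Icc 0 T) := fun s hs => (hV s hs).continuousAt.continuousWithinAt
  have hcyl : ∀ s ∈ Icc 0 T, X s ∈ cyl A := hconf
  have hg : ContinuousOn (fun s => X s 1 * eE s 2 - X s 2 * eE s 1) (Icc 0 T) := by fun_prop
  have hFTC := intervalIntegral.integral_eq_sub_of_hasDerivWithinAt_Icc
    (fun s hs => hasDerivWithinAt_half_primitive_sub_angularMomentum hH hX hV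
      (fun u hu => ⟨by positivity, hconf u hu⟩) hs) hg ht
  have hb : (1/2) * (H (X t 1 ^ 2 + X t 2 ^ 2) - H (X 0 1 ^ 2 + X 0 2 ^ 2)) =
      (V t 1 * X t 2 - V t 2 * X t 1) - (V 0 1 * X 0 2 - V 0 2 * X 0 1)
        + ∫ s in (0:ℝ)..t, (X s 1 * eE s 2 - X s 2 * eE s 1) := by
    rw [hFTC]; ring
  refine ⟨axial_lorentz_force_identity _ _ _ _, hb, ?_⟩
  have hL : ∀ s ∈ Icc 0 t, |V s 1 * X s 2 - V s 2 * X s 1| ≤ A * ⨆ s : Icc (0:ℝ) t, ‖V (s : ℝ)‖ :=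
    fun s hs => (abs_mul_sub_mul_le_of_mem_cyl hA.le (hcyl s (hsub hs)) (V s)).trans
      (mul_le_mul_of_nonneg_left
        (isCompact_Icc.le_ciSup_of_continuousOn (hVcont.norm.mono hsub) hs) hA.le)
  have hI := integral_mul_sub_mul_le_of_mem_cyl hA.le ht.1 (fun s hs => hcyl s (hsub hs))
    (hg.mono hsub) heE
  have hLt := hL t (right_mem_Icc.2 ht.1)
  have hL0 := hL 0 (left_mem_Icc.2 ht.1)
  linarith [le_abs_self (V t 1 * X t 2 - V t 2 * X t 1), neg_abs_le (V 0 1 * X 0 2 - V 0 2 * X 0 1)]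

/-- The identities behind the confinement estimate (eqns. (26)-(27) of the paper): for a C¹
solution of `Ẋ = V`, `V̇ = E(t) + V × B(X)` with `B(x) = (h(x₂²+x₃²),0,0)` staying in the
cylinder, one has the pointwise identity (a), the integrated identity (b), and the bound (c)
for a primitive `H` of `h`. -/
theorem confinement_identity
    (A T : ℝ) (hA : 0 < A) (hT : 0 < T)
    (h H : ℝ → ℝ)
    (hh : ContinuousOn h (Ico 0 (A ^ 2)))
    (hH : ∀ u ∈ Ico (0:ℝ) (A ^ 2), HasDerivWithinAt H (h u) (Ico 0 (A ^ 2)) u)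
    (eE : ℝ → E3) (heE : Continuous eE)
    (X V : ℝ → E3)
    (hX : ∀ t ∈ Icc (0:ℝ) T, HasDerivAt X (V t) t)
    (hV : ∀ t ∈ Icc (0:ℝ) T,
      HasDerivAt V (eE t + cross3 (V t) (WithLp.toLp 2 ![h (X t 1 ^ 2 + X t 2 ^ 2), 0, 0])) t)
    (hVcont : Continuous V)
    (hconf : ∀ t ∈ Icc (0:ℝ) T, X t 1 ^ 2 + X t 2 ^ 2 < A ^ 2) :
    ∀ t ∈ Icc (0:ℝ) T,
      -- (a) pointwise identity
      (h (X t 1 ^ 2 + X t 2 ^ 2) * (V t 1 * X t 1 + V t 2 * X t 2) =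
        (eE t + cross3 (V t) (WithLp.toLp 2 ![h (X t 1 ^ 2 + X t 2 ^ 2), 0, 0])) 1 * X t 2
          - (eE t + cross3 (V t) (WithLp.toLp 2 ![h (X t 1 ^ 2 + X t 2 ^ 2), 0, 0])) 2 * X t 1
          + X t 1 * eE t 2 - X t 2 * eE t 1) ∧
      -- (b) integrated identity
      ((1/2) * (H (X t 1 ^ 2 + X t 2 ^ 2) - H (X 0 1 ^ 2 + X 0 2 ^ 2)) =
        (V t 1 * X t 2 - V t 2 * X t 1) - (V 0 1 * X 0 2 - V 0 2 * X 0 1)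
          + ∫ s in (0:ℝ)..t, (X s 1 * eE s 2 - X s 2 * eE s 1)) ∧
      -- (c) consequence
      (H (X t 1 ^ 2 + X t 2 ^ 2) ≤ H (X 0 1 ^ 2 + X 0 2 ^ 2)
          + 4 * A * (⨆ s : Icc (0:ℝ) t, ‖V (s : ℝ)‖)
          + 2 * A * ∫ s in (0:ℝ)..t, ‖eE s‖) :=
  confinement_identity_general A T hA h H hH eE heE X V hX hV hconf
end
end
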